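/- arXiv:1003.4335 — 4 statements merged into one kernel-verified Lean document; each statement's English description precedes it below -/
import Mathlib

section
/- Let γ > 1, n ≥ 2, B₀ > 0, K₀ = 2(γ−1)B₀/(γ+1), and 0 < r₀ < r₁. Suppose u : [r₀, r₁] → ℝ is differentiable, satisfies the ODE u'(r) = 2(n−1)(γ−1)·u(r)·(B₀ − u(r)²/2) / ((γ+1)·r·(u(r)² − K₀)) on [r₀, r₁], and K₀ < u(r₀)² < 2B₀ with u(r₀) > 0. Then u(r) > √K₀ and u'(r) > 0 for all r ∈ [r₀, r₁]; i.e., a radial supersonic solution remains supersonic and its speed is monotonically increasing in r. -/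
/-!
Between the sonic speed `√K₀` and the limit speed `√(2 B₀)` the right-hand side of the ODE is
positive, so while the solution stays in that range it increases and cannot fall back to `√K₀`.
Nor can it reach `√(2 B₀)`: `w = 2 B₀ - u²` solves `w' = -g w` with `g = c u² / (r (u² - K₀))`,
which is bounded because `u² - K₀ ≥ u(r₀)² - K₀`, so by Grönwall `w` stays positive. A first-exit
argument turns these a-priori bounds into invariance of the range.
-/

open Set Real

theorem ContinuousOn.mapsTo_of_forall_mapsTo_Ico {α β : Type*} [ConditionallyCompleteLinearOrder α]
    [TopologicalSpace α] [OrderTopology α] [TopologicalSpace β] {u : α → β} {U : Set β} {a b : α}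
    (hu : ContinuousOn u (Icc a b)) (hU : IsOpen U) (ha : u a ∈ U)
    (hstep : ∀ T ∈ Ioc a b, MapsTo u (Ico a T) U → u T ∈ U) : MapsTo u (Icc a b) U := by
  by_contra hexit
  set exits := Icc a b ∩ u ⁻¹' Uᶜ
  have hne : exits.Nonempty := by
    obtain ⟨t, ht, htU⟩ := not_forall₂.1 hexit
    exact ⟨t, ht, htU⟩
  have hbdd : BddBelow exits := ⟨a, fun t ht => ht.1.1⟩
  obtain ⟨⟨haT, hTb⟩, hTU⟩ : sInf exits ∈ exits :=
    (hu.preimage_isClosed_of_isClosed isClosed_Icc hU.isClosed_compl).csInf_mem hne hbdd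
  have hT : a < sInf exits := haT.lt_of_ne fun h => hTU (h ▸ ha)
  refine hTU (hstep _ ⟨hT, hTb⟩ fun t ht => ?_)
  by_contra htU
  exact (csInf_le hbdd ⟨⟨ht.1, ht.2.le.trans hTb⟩, htU⟩).not_gt ht.2

theorem mul_exp_le_of_mul_le_deriv {w w' : ℝ → ℝ} {K a b : ℝ} (hw : ContinuousOn w (Icc a b))
    (hw' : ∀ x ∈ Ico a b, HasDerivWithinAt w (w' x) (Ici x) x)
    (bound : ∀ x ∈ Ico a b, K * w x ≤ w' x) :
    ∀ x ∈ Icc a b, w a * exp (K * (x - a)) ≤ w x := by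
  intro x hx
  have := le_gronwallBound_of_liminf_deriv_right_le (f := -w) (f' := -w') (ε := 0) hw.neg
    (fun x hx _ hr => (hw' x hx).neg.liminf_right_slope_le hr) le_rfl
    (fun x hx => by simp only [Pi.neg_apply]; linarith [bound x hx]) x hx
  rw [gronwallBound_ε0] at this
  simp only [Pi.neg_apply] at this
  linarith

noncomputable def radialField (c B₀ K₀ r v : ℝ) : ℝ :=
  c * v * (B₀ - v ^ 2 / 2) / (r * (v ^ 2 - K₀))

def supersonicSpeeds (K₀ B₀ : ℝ) : Set ℝ := Ioo (√K₀) (√(2 * B₀))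

section

variable {c B₀ K₀ r₀ r₁ r T v δ : ℝ} {u : ℝ → ℝ}

theorem mem_supersonicSpeeds :
    v ∈ supersonicSpeeds K₀ B₀ ↔ 0 < v ∧ K₀ < v ^ 2 ∧ v ^ 2 < 2 * B₀ := by
  constructor
  · rintro ⟨hK, hB⟩
    have hv : 0 < v := (sqrt_nonneg K₀).trans_lt hK
    exact ⟨hv, (sqrt_lt' hv).1 hK, (lt_sqrt hv.le).1 hB⟩
  · rintro ⟨hv, hK, hB⟩
    exact ⟨(sqrt_lt' hv).2 hK, (lt_sqrt hv.le).2 hB⟩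

theorem radialField_pos (hc : 0 < c) (hr : 0 < r) (hv : v ∈ supersonicSpeeds K₀ B₀) :
    0 < radialField c B₀ K₀ r v := by
  obtain ⟨hv, hK, hB⟩ := mem_supersonicSpeeds.1 hv
  exact div_pos (mul_pos (mul_pos hc hv) (by linarith)) (mul_pos hr (by linarith))

theorem two_mul_mul_radialField_le (hc : 0 < c) (hr₀ : 0 < r₀) (hr : r₀ ≤ r) (hδ : 0 < δ)
    (hδv : δ ≤ v ^ 2 - K₀) (hv : v ^ 2 ≤ 2 * B₀) :
    2 * v * radialField c B₀ K₀ r v ≤ c * (2 * B₀) / (r₀ * δ) * (2 * B₀ - v ^ 2) := by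
  have hsplit : 2 * v * radialField c B₀ K₀ r v
      = c * v ^ 2 / (r * (v ^ 2 - K₀)) * (2 * B₀ - v ^ 2) := by
    unfold radialField; ring
  rw [hsplit]
  gcongr
  · nlinarith [sq_nonneg v]
  · linarith

theorem mem_supersonicSpeeds_of_mapsTo_Ico (hc : 0 < c) (hr₀ : 0 < r₀) (hT : r₀ < T)
    (hode : ∀ r ∈ Icc r₀ T, HasDerivAt u (radialField c B₀ K₀ r (u r)) r)
    (hsup : MapsTo u (Ico r₀ T) (supersonicSpeeds K₀ B₀)) : u T ∈ supersonicSpeeds K₀ B₀ := by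
  have hcont : ContinuousOn u (Icc r₀ T) := fun r hr =>
    (hode r hr).continuousAt.continuousWithinAt
  have hmono : MonotoneOn u (Icc r₀ T) := by
    refine monotoneOn_of_hasDerivWithinAt_nonneg (f' := fun r => radialField c B₀ K₀ r (u r))
      (convex_Icc _ _) hcont (fun x hx => ?_) (fun x hx => ?_) <;> rw [interior_Icc] at hx
    · exact (hode x (Ioo_subset_Icc_self hx)).hasDerivWithinAt
    · exact (radialField_pos hc (hr₀.trans hx.1) (hsup ⟨hx.1.le, hx.2⟩)).le
  have hge : ∀ t ∈ Icc r₀ T, u r₀ ≤ u t := fun t ht => hmono (left_mem_Icc.2 hT.le) ht ht.1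
  obtain ⟨hu₀, hK₀, hB₀⟩ := mem_supersonicSpeeds.1 (hsup (left_mem_Ico.2 hT))
  have hT₀ : u r₀ ≤ u T := hge T (right_mem_Icc.2 hT.le)
  set M := c * (2 * B₀) / (r₀ * (u r₀ ^ 2 - K₀))
  have hw : ∀ x ∈ Ico r₀ T, HasDerivWithinAt (fun r => 2 * B₀ - u r ^ 2)
      (-(2 * u x * radialField c B₀ K₀ x (u x))) (Ici x) x := fun x hx =>
    (((hasDerivAt_const x (2 * B₀)).sub
      ((hode x (Ico_subset_Icc_self hx)).pow 2)).hasDerivWithinAt).congr_deriv (by ring)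
  have hbound : ∀ x ∈ Ico r₀ T,
      -M * (2 * B₀ - u x ^ 2) ≤ -(2 * u x * radialField c B₀ K₀ x (u x)) := fun x hx => by
    obtain ⟨-, -, hBx⟩ := mem_supersonicSpeeds.1 (hsup hx)
    have hsq : u r₀ ^ 2 ≤ u x ^ 2 := pow_le_pow_left₀ hu₀.le (hge x (Ico_subset_Icc_self hx)) 2
    rw [neg_mul, neg_le_neg_iff]
    exact two_mul_mul_radialField_le hc hr₀ hx.1 (by linarith) (by linarith) hBx.le
  have hdecay := mul_exp_le_of_mul_le_deriv (w := fun r => 2 * B₀ - u r ^ 2)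
    (continuousOn_const.sub (hcont.pow 2)) hw hbound T (right_mem_Icc.2 hT.le)
  have hw₀ : 0 < (2 * B₀ - u r₀ ^ 2) * exp (-M * (T - r₀)) := mul_pos (by linarith) (exp_pos _)
  exact mem_supersonicSpeeds.2 ⟨hu₀.trans_le hT₀,
    hK₀.trans_le (pow_le_pow_left₀ hu₀.le hT₀ 2), by linarith⟩

theorem mapsTo_supersonicSpeeds (hc : 0 < c) (hr₀ : 0 < r₀)
    (hode : ∀ r ∈ Icc r₀ r₁, HasDerivAt u (radialField c B₀ K₀ r (u r)) r)
    (hinit : u r₀ ∈ supersonicSpeeds K₀ B₀) : MapsTo u (Icc r₀ r₁) (supersonicSpeeds K₀ B₀) :=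
  ContinuousOn.mapsTo_of_forall_mapsTo_Ico
    (fun r hr => (hode r hr).continuousAt.continuousWithinAt) isOpen_Ioo hinit
    fun _ hT hsup => mem_supersonicSpeeds_of_mapsTo_Ico hc hr₀ hT.1
      (fun r hr => hode r ⟨hr.1, hr.2.trans hT.2⟩) hsup

end

theorem stmt4_general (γ B₀ r₀ r₁ : ℝ) (n : ℕ) (hγ : 1 < γ) (hn : 2 ≤ n)
    (hr0 : 0 < r₀)
    (K₀ : ℝ)
    (u : ℝ → ℝ)
    (hode : ∀ r ∈ Set.Icc r₀ r₁, HasDerivAt u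
      (2 * ((n : ℝ) - 1) * (γ - 1) * u r * (B₀ - u r ^ 2 / 2)
        / ((γ + 1) * r * (u r ^ 2 - K₀))) r)
    (hinit1 : K₀ < u r₀ ^ 2) (hinit2 : u r₀ ^ 2 < 2 * B₀) (hpos : 0 < u r₀) :
    ∀ r ∈ Set.Icc r₀ r₁, Real.sqrt K₀ < u r ∧
      0 < 2 * ((n : ℝ) - 1) * (γ - 1) * u r * (B₀ - u r ^ 2 / 2)
        / ((γ + 1) * r * (u r ^ 2 - K₀)) := by
  set c := 2 * ((n : ℝ) - 1) * (γ - 1) / (γ + 1)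
  have hc : 0 < c := by
    have hn' : (2 : ℝ) ≤ n := by exact_mod_cast hn
    exact div_pos (mul_pos (by linarith) (by linarith)) (by linarith)
  have hfield : ∀ r v, 2 * ((n : ℝ) - 1) * (γ - 1) * v * (B₀ - v ^ 2 / 2)
      / ((γ + 1) * r * (v ^ 2 - K₀)) = radialField c B₀ K₀ r v := by
    intro r v
    rw [mul_assoc (γ + 1), ← div_div]
    unfold radialField c
    ring
  simp only [hfield] at hode ⊢
  intro r hr
  have hsup := mapsTo_supersonicSpeeds hc hr0 hode
    (mem_supersonicSpeeds.2 ⟨hpos, hinit1, hinit2⟩) hr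
  exact ⟨hsup.1, radialField_pos hc (hr0.trans_le hr.1) hsup⟩

/-- A radial supersonic solution of the potential-flow ODE in a divergent nozzle remains
supersonic and its speed is monotonically increasing in `r`. -/
theorem stmt4 (γ B₀ r₀ r₁ : ℝ) (n : ℕ) (hγ : 1 < γ) (hn : 2 ≤ n) (hB : 0 < B₀)
    (hr0 : 0 < r₀) (hr : r₀ < r₁)
    (K₀ : ℝ) (hK : K₀ = 2 * (γ - 1) * B₀ / (γ + 1))
    (u : ℝ → ℝ)
    (hode : ∀ r ∈ Set.Icc r₀ r₁, HasDerivAt u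
      (2 * ((n : ℝ) - 1) * (γ - 1) * u r * (B₀ - u r ^ 2 / 2)
        / ((γ + 1) * r * (u r ^ 2 - K₀))) r)
    (hinit1 : K₀ < u r₀ ^ 2) (hinit2 : u r₀ ^ 2 < 2 * B₀) (hpos : 0 < u r₀) :
    ∀ r ∈ Set.Icc r₀ r₁, Real.sqrt K₀ < u r ∧
      0 < 2 * ((n : ℝ) - 1) * (γ - 1) * u r * (B₀ - u r ^ 2 / 2)
        / ((γ + 1) * r * (u r ^ 2 - K₀)) :=
  stmt4_general γ B₀ r₀ r₁ n hγ hn hr0 K₀ u hode hinit1 hinit2 hpos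
end

section
/- Let γ > 1, n ≥ 2, B₀ > 0, K₀ = 2(γ−1)B₀/(γ+1), and r_s ∈ (r₀, r₁). Suppose u : [r_s, r₁] → ℝ is differentiable, satisfies u'(r) = 2(n−1)(γ−1)·u(r)·(B₀ − u(r)²/2) / ((γ+1)·r·(u(r)² − K₀)) on [r_s, r₁], and 0 < u(r_s)² < K₀. Then 0 < u(r) < √K₀ and u'(r) < 0 for all r ∈ [r_s, r₁]; i.e., a radial subsonic solution remains subsonic with decreasing speed. -/
/-!
While `0 < u` and `u² < K₀` the right-hand side of the ODE is negative, so `u` can never climb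
back to its initial value: by a barrier argument `u ≤ u r_s` on the whole interval. On the region
`0 < u ≤ u r_s` the right-hand side is bounded below by `-M u` for a constant `M` (the factor
`u² - K₀` stays away from `0` and `r ≥ r_s > 0`), so `u` dominates the barrier
`u r_s · exp (-M (r - r_s))` and never reaches `0`.
-/

open Set Real

/-- The right-hand side of the radial ODE, with `c = 2 (n - 1) (γ - 1)` and `d = γ + 1`. -/
noncomputable def nozzleRHS (c d B₀ K₀ r u : ℝ) : ℝ :=
  c * u * (B₀ - u ^ 2 / 2) / (d * r * (u ^ 2 - K₀))

section RightHandSide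

variable {c d B₀ K₀ r u : ℝ}

theorem nozzleRHS_neg (hc : 0 < c) (hd : 0 < d) (hK₀ : K₀ ≤ 2 * B₀) (hr : 0 < r)
    (hu : 0 < u) (hu2 : u ^ 2 < K₀) : nozzleRHS c d B₀ K₀ r u < 0 := by
  have hB : 0 < B₀ - u ^ 2 / 2 := by linarith
  exact div_neg_of_pos_of_neg (by positivity) (mul_neg_of_pos_of_neg (by positivity) (by linarith))

theorem neg_mul_lt_nozzleRHS {a w : ℝ} (hc : 0 < c) (hd : 0 < d) (hB : 0 ≤ B₀) (ha : 0 < a)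
    (hr : a ≤ r) (hu : 0 < u) (huw : u ^ 2 ≤ w) (hw : w < K₀) :
    -(c * B₀ / (d * a * (K₀ - w))) * u < nozzleRHS c d B₀ K₀ r u := by
  have hr0 : 0 < r := ha.trans_le hr
  have hrate :
      c * (B₀ - u ^ 2 / 2) / (d * r * (K₀ - u ^ 2)) < c * B₀ / (d * a * (K₀ - w)) := by
    refine div_lt_div₀ (by nlinarith [mul_pos hc (pow_pos hu 2)]) ?_ (by positivity)
      (mul_pos (by positivity) (by linarith))
    gcongr
  have hrhs :
      nozzleRHS c d B₀ K₀ r u = -(c * (B₀ - u ^ 2 / 2) / (d * r * (K₀ - u ^ 2))) * u := by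
    have : K₀ - u ^ 2 ≠ 0 := by nlinarith
    have : u ^ 2 - K₀ ≠ 0 := by nlinarith
    rw [nozzleRHS]
    field_simp
    ring
  rw [hrhs]
  exact mul_lt_mul_of_pos_right (neg_lt_neg hrate) hu

end RightHandSide

section Solution

variable {c d B₀ K₀ a b : ℝ} {u : ℝ → ℝ}

theorem le_initial_of_hasDerivAt_nozzleRHS (hc : 0 < c) (hd : 0 < d) (hK₀ : K₀ ≤ 2 * B₀)
    (ha : 0 < a) (hode : ∀ r ∈ Icc a b, HasDerivAt u (nozzleRHS c d B₀ K₀ r (u r)) r)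
    (hu0 : 0 < u a) (hu2 : u a ^ 2 < K₀) : ∀ r ∈ Icc a b, u r ≤ u a := by
  refine image_le_of_deriv_right_lt_deriv_boundary
    (fun r hr => (hode r hr).continuousAt.continuousWithinAt)
    (fun r hr => (hode r (Ico_subset_Icc_self hr)).hasDerivWithinAt) le_rfl
    (fun _ => hasDerivAt_const _ _) fun r hr hur => ?_
  rw [hur]
  exact nozzleRHS_neg hc hd hK₀ (ha.trans_le hr.1) hu0 hu2

theorem initial_mul_exp_le_of_hasDerivAt_nozzleRHS (hc : 0 < c) (hd : 0 < d)
    (hK₀ : K₀ ≤ 2 * B₀) (ha : 0 < a)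
    (hode : ∀ r ∈ Icc a b, HasDerivAt u (nozzleRHS c d B₀ K₀ r (u r)) r)
    (hu0 : 0 < u a) (hu2 : u a ^ 2 < K₀) :
    ∀ r ∈ Icc a b, u a * exp (-(c * B₀ / (d * a * (K₀ - u a ^ 2))) * (r - a)) ≤ u r := by
  set M := c * B₀ / (d * a * (K₀ - u a ^ 2))
  have hbarrier : ∀ r, HasDerivAt (fun r => u a * exp (-M * (r - a)))
      (-M * (u a * exp (-M * (r - a)))) r := by
    intro r
    exact ((((hasDerivAt_id' r).sub_const a).const_mul (-M)).exp.const_mul (u a)).congr_deriv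
      (by ring)
  have hB : 0 ≤ B₀ := by nlinarith
  refine image_le_of_deriv_right_lt_deriv_boundary'
    (fun r _ => (hbarrier r).continuousAt.continuousWithinAt)
    (fun r _ => (hbarrier r).hasDerivWithinAt) (by simp)
    (fun r hr => (hode r hr).continuousAt.continuousWithinAt)
    (fun r hr => (hode r (Ico_subset_Icc_self hr)).hasDerivWithinAt) fun r hr hbu => ?_
  have hr : r ∈ Icc a b := Ico_subset_Icc_self hr
  have hur : 0 < u r := hbu ▸ by positivity
  have hule := le_initial_of_hasDerivAt_nozzleRHS hc hd hK₀ ha hode hu0 hu2 r hr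
  rw [hbu]
  exact neg_mul_lt_nozzleRHS hc hd hB ha hr.1 hur (pow_le_pow_left₀ hur.le hule 2) hu2

end Solution

/-- A radial subsonic solution of the potential-flow ODE in a divergent nozzle remains
subsonic with decreasing speed. -/
theorem stmt5 (γ B₀ r₀ r₁ rs : ℝ) (n : ℕ) (hγ : 1 < γ) (hn : 2 ≤ n) (hB : 0 < B₀)
    (hr0 : 0 < r₀) (hrs : rs ∈ Set.Ioo r₀ r₁)
    (K₀ : ℝ) (hK : K₀ = 2 * (γ - 1) * B₀ / (γ + 1))
    (u : ℝ → ℝ)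
    (hode : ∀ r ∈ Set.Icc rs r₁, HasDerivAt u
      (2 * ((n : ℝ) - 1) * (γ - 1) * u r * (B₀ - u r ^ 2 / 2)
        / ((γ + 1) * r * (u r ^ 2 - K₀))) r)
    (hinit1 : 0 < u rs) (hinit2 : u rs ^ 2 < K₀) :
    ∀ r ∈ Set.Icc rs r₁, (0 < u r ∧ u r < Real.sqrt K₀) ∧
      2 * ((n : ℝ) - 1) * (γ - 1) * u r * (B₀ - u r ^ 2 / 2)
        / ((γ + 1) * r * (u r ^ 2 - K₀)) < 0 := by
  have hc : 0 < 2 * ((n : ℝ) - 1) * (γ - 1) := by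
    have : (2 : ℝ) ≤ n := by exact_mod_cast hn
    have : 0 < (n : ℝ) - 1 := by linarith
    have : 0 < γ - 1 := by linarith
    positivity
  have hd : 0 < γ + 1 := by linarith
  have hK₀ : K₀ ≤ 2 * B₀ := by
    rw [hK, div_le_iff₀ hd]
    nlinarith
  have hrs₀ : 0 < rs := hr0.trans hrs.1
  intro r hr
  have hpos : 0 < u r := (by positivity : 0 < u rs * exp _).trans_le
    (initial_mul_exp_le_of_hasDerivAt_nozzleRHS hc hd hK₀ hrs₀ hode hinit1 hinit2 r hr)
  have hle := le_initial_of_hasDerivAt_nozzleRHS hc hd hK₀ hrs₀ hode hinit1 hinit2 r hr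
  have hsq : u r ^ 2 < K₀ := (pow_le_pow_left₀ hpos.le hle 2).trans_lt hinit2
  exact ⟨⟨hpos, (lt_sqrt hpos.le).mpr hsq⟩,
    nozzleRHS_neg hc hd hK₀ (hrs₀.trans_le hr.1) hpos hsq⟩
end

section
/- Let k₁, k₂ : [r_s, r₁] → ℝ be continuous with k₁ > 0 and k₂ > 0 on [r_s, r₁], let λ ≥ 0 and μ₀ > 0 be constants, and suppose q ∈ C¹([r_s, r₁]) with k₁q' differentiable satisfies (k₁ q')' = λ k₂ q on (r_s, r₁), the boundary conditions q'(r_s) − μ₀ q(r_s) = 0 and q'(r₁) = c/k₁(r₁) for a constant c, and moreover q(r_s) = −β c for some constant β > 0. Then c = 0 (and hence q ≡ 0). -/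
/-!
The energy `F = k₁ q' q` satisfies `F' = λ k₂ q² + k₁ q'² ≥ 0`, and the Robin condition gives
`F(r_s) = μ₀ k₁(r_s) q(r_s)² ≥ 0`, so `F ≥ 0` on `[r_s, r₁]`. Since `(q²)' = 2F/k₁ ≥ 0`, `q`
cannot vanish once `q(r_s) ≠ 0`, so it keeps the sign of `q(r_s) = -βc`; then `F(r₁) = c q(r₁) < 0`
unless `c = 0`. Finally `c = 0` forces `F(r₁) = 0`, hence `F ≡ 0`, `q q' ≡ 0`, and `q² ≡ q(r_s)² = 0`.
-/

open Set

section EnergyMethod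

variable {a b : ℝ} {q qd : ℝ → ℝ}

theorem monotoneOn_mul_deriv_mul_of_hasDerivAt {lam : ℝ} {k₁ k₂ : ℝ → ℝ} (hlam : 0 ≤ lam)
    (hk₁ : ∀ r ∈ Ioo a b, 0 ≤ k₁ r) (hk₂ : ∀ r ∈ Ioo a b, 0 ≤ k₂ r)
    (hcont : ContinuousOn (fun r => k₁ r * qd r * q r) (Icc a b))
    (hq : ∀ r ∈ Ioo a b, HasDerivAt q (qd r) r)
    (hode : ∀ r ∈ Ioo a b, HasDerivAt (fun s => k₁ s * qd s) (lam * k₂ r * q r) r) :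
    MonotoneOn (fun r => k₁ r * qd r * q r) (Icc a b) := by
  refine monotoneOn_of_hasDerivWithinAt_nonneg (convex_Icc a b) hcont
    (f' := fun r => lam * k₂ r * q r * q r + k₁ r * qd r * qd r) (fun r hr => ?_) fun r hr => ?_
  · rw [interior_Icc] at hr ⊢
    exact ((hode r hr).mul (hq r hr)).hasDerivWithinAt
  · rw [interior_Icc] at hr
    have := mul_nonneg (mul_nonneg hlam (hk₂ r hr)) (mul_self_nonneg (q r))
    have := mul_nonneg (hk₁ r hr) (mul_self_nonneg (qd r))
    linarith

theorem monotoneOn_sq_of_mul_deriv_nonneg (hqc : ContinuousOn q (Icc a b))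
    (hq : ∀ r ∈ Ioo a b, HasDerivAt q (qd r) r) (hnonneg : ∀ r ∈ Ioo a b, 0 ≤ q r * qd r) :
    MonotoneOn (fun r => q r ^ 2) (Icc a b) := by
  refine monotoneOn_of_hasDerivWithinAt_nonneg (convex_Icc a b) (hqc.pow 2)
    (f' := fun r => 2 * (q r * qd r)) (fun r hr => ?_) fun r hr => ?_
  · rw [interior_Icc] at hr ⊢
    simpa [mul_assoc] using ((hq r hr).fun_pow 2).hasDerivWithinAt
  · rw [interior_Icc] at hr
    linarith [hnonneg r hr]

theorem sq_eq_of_mul_deriv_eq_zero (hq : ∀ r ∈ Icc a b, HasDerivWithinAt q (qd r) (Icc a b) r)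
    (hzero : ∀ r ∈ Icc a b, q r * qd r = 0) : ∀ r ∈ Icc a b, q r ^ 2 = q a ^ 2 := by
  refine constant_of_has_deriv_right_zero (fun r hr => ((hq r hr).pow 2).continuousWithinAt)
    fun r hr => ?_
  have hderiv := ((hq r (Ico_subset_Icc_self hr)).fun_pow 2).mono_of_mem_nhdsWithin
    (Icc_mem_nhdsGE_of_mem ⟨hr.1, hr.2⟩)
  simpa [mul_assoc, hzero r (Ico_subset_Icc_self hr)] using hderiv

theorem mul_pos_of_monotoneOn_sq (hab : a ≤ b) (hqc : ContinuousOn q (Icc a b))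
    (hsq : MonotoneOn (fun r => q r ^ 2) (Icc a b)) (ha : q a ≠ 0) : 0 < q a * q b := by
  have hne : ∀ r ∈ Icc a b, q r ≠ 0 := fun r hr h0 => by
    have := hsq (left_mem_Icc.2 hab) hr hr.1
    simp only [h0] at this
    exact ha (pow_eq_zero_iff two_ne_zero |>.1 (le_antisymm (by simpa using this) (sq_nonneg _)))
  by_contra! hnonpos
  have h0 : (0 : ℝ) ∈ uIcc (q a) (q b) := by
    rw [mem_uIcc]
    rcases mul_nonpos_iff.1 hnonpos with h | h
    · exact Or.inr ⟨h.2, h.1⟩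
    · exact Or.inl h
  rw [← uIcc_of_le hab] at hqc hne
  obtain ⟨r, hr, hr0⟩ := intermediate_value_uIcc hqc h0
  exact hne r hr hr0

end EnergyMethod
theorem stmt6_general (rs r₁ μ₀ lam c β : ℝ) (hr : rs < r₁) (hμ : 0 < μ₀) (hlam : 0 ≤ lam)
    (hβ : 0 < β) (k₁ k₂ q qd : ℝ → ℝ)
    (hk₁c : ContinuousOn k₁ (Set.Icc rs r₁))
    (hk₁ : ∀ r ∈ Set.Icc rs r₁, 0 < k₁ r) (hk₂ : ∀ r ∈ Set.Icc rs r₁, 0 < k₂ r)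
    (hq : ∀ r ∈ Set.Icc rs r₁, HasDerivWithinAt q (qd r) (Set.Icc rs r₁) r)
    (hqd : ContinuousOn qd (Set.Icc rs r₁))
    (hode : ∀ r ∈ Set.Ioo rs r₁,
      HasDerivAt (fun s => k₁ s * qd s) (lam * k₂ r * q r) r)
    (hbc1 : qd rs - μ₀ * q rs = 0) (hbc2 : qd r₁ = c / k₁ r₁)
    (hqrs : q rs = -β * c) :
    c = 0 ∧ ∀ r ∈ Set.Icc rs r₁, q r = 0 := by
  have hrs : rs ∈ Icc rs r₁ := left_mem_Icc.2 hr.le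
  have hr₁ : r₁ ∈ Icc rs r₁ := right_mem_Icc.2 hr.le
  have hqc : ContinuousOn q (Icc rs r₁) := fun r hr => (hq r hr).continuousWithinAt
  have hq' : ∀ r ∈ Ioo rs r₁, HasDerivAt q (qd r) r := fun r hr =>
    (hq r (Ioo_subset_Icc_self hr)).hasDerivAt (Icc_mem_nhds hr.1 hr.2)
  set F : ℝ → ℝ := fun r => k₁ r * qd r * q r with hF
  have hFmono : MonotoneOn F (Icc rs r₁) :=
    monotoneOn_mul_deriv_mul_of_hasDerivAt hlam (fun r hr => (hk₁ r (Ioo_subset_Icc_self hr)).le)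
      (fun r hr => (hk₂ r (Ioo_subset_Icc_self hr)).le) ((hk₁c.mul hqd).mul hqc) hq' hode
  have hFrs : F rs = μ₀ * k₁ rs * q rs ^ 2 := by
    simp only [hF, show qd rs = μ₀ * q rs by linarith]; ring
  have hFr₁ : F r₁ = c * q r₁ := by
    simp only [hF, hbc2]; field_simp [(hk₁ r₁ hr₁).ne']
  have hFnonneg : ∀ r ∈ Icc rs r₁, 0 ≤ F r := fun r hr => by
    have := hk₁ rs hrs
    exact (hFrs ▸ by positivity : 0 ≤ F rs).trans (hFmono hrs hr hr.1)
  have hqqd : ∀ r ∈ Icc rs r₁, q r * qd r = F r / k₁ r := fun r hr => by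
    field_simp [(hk₁ r hr).ne']; ring
  have hc : c = 0 := by
    by_contra hc
    have hsq := monotoneOn_sq_of_mul_deriv_nonneg hqc hq' fun r hr => by
      rw [hqqd r (Ioo_subset_Icc_self hr)]
      exact div_nonneg (hFnonneg r (Ioo_subset_Icc_self hr)) (hk₁ r (Ioo_subset_Icc_self hr)).le
    have hsign := mul_pos_of_monotoneOn_sq hr.le hqc hsq
      (hqrs ▸ mul_ne_zero (neg_ne_zero.2 hβ.ne') hc)
    rw [hqrs] at hsign
    nlinarith [hFr₁ ▸ hFnonneg r₁ hr₁]
  have hF0 : ∀ r ∈ Icc rs r₁, F r = 0 := fun r hr =>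
    le_antisymm ((hFmono hr hr₁ hr.2).trans (by rw [hFr₁, hc, zero_mul])) (hFnonneg r hr)
  have hsq := sq_eq_of_mul_deriv_eq_zero hq fun r hr => by rw [hqqd r hr, hF0 r hr, zero_div]
  refine ⟨hc, fun r hr => ?_⟩
  simpa [hqrs, hc] using hsq r hr

/-- ODE uniqueness lemma for the eigenfunction modes: if `(k₁ q')' = λ k₂ q` with
`q'(r_s) − μ₀ q(r_s) = 0`, `q'(r₁) = c/k₁(r₁)` and `q(r_s) = −β c` with `β > 0`,
then `c = 0` and `q ≡ 0`. -/
theorem stmt6 (rs r₁ μ₀ lam c β : ℝ) (hr : rs < r₁) (hμ : 0 < μ₀) (hlam : 0 ≤ lam)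
    (hβ : 0 < β) (k₁ k₂ q qd : ℝ → ℝ)
    (hk₁c : ContinuousOn k₁ (Set.Icc rs r₁)) (hk₂c : ContinuousOn k₂ (Set.Icc rs r₁))
    (hk₁ : ∀ r ∈ Set.Icc rs r₁, 0 < k₁ r) (hk₂ : ∀ r ∈ Set.Icc rs r₁, 0 < k₂ r)
    (hq : ∀ r ∈ Set.Icc rs r₁, HasDerivWithinAt q (qd r) (Set.Icc rs r₁) r)
    (hqd : ContinuousOn qd (Set.Icc rs r₁))
    (hode : ∀ r ∈ Set.Ioo rs r₁,
      HasDerivAt (fun s => k₁ s * qd s) (lam * k₂ r * q r) r)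
    (hbc1 : qd rs - μ₀ * q rs = 0) (hbc2 : qd r₁ = c / k₁ r₁)
    (hqrs : q rs = -β * c) :
    c = 0 ∧ ∀ r ∈ Set.Icc rs r₁, q r = 0 :=
  stmt6_general rs r₁ μ₀ lam c β hr hμ hlam hβ k₁ k₂ q qd hk₁c hk₁ hk₂ hq hqd hode hbc1 hbc2 hqrs
end

section
/- Let γ > 1, B₀ > 0, K₀ = 2(γ−1)B₀/(γ+1). Suppose ρ₋, p₋, v₋ > 0 satisfy the Bernoulli law v₋²/2 + γp₋/((γ−1)ρ₋) = B₀ and v₋² > K₀ and v₋² < 2B₀. Define the downstream state v₊ = K₀/v₋, p₊ = ρ₋v₋² + p₋ − ρ₋K₀, ρ₊ = γp₊/((γ−1)(B₀ − v₊²/2)). Then the specific entropy strictly increases across the shock: p₊/ρ₊^γ > p₋/ρ₋^γ. -/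
/-!
Write `β = v₋² / K₀ > 1` for the compression ratio. The Bernoulli law and the Rankine–Hugoniot
relations give `ρ₊ = β ρ₋`, `2γ p₋ = ρ₋ K₀ ((γ+1) - (γ-1)β)` and `2γ p₊ = ρ₋ K₀ ((γ+1)β - (γ-1))`,
so the entropy inequality reduces to `β^γ ((γ+1) - (γ-1)β) < (γ+1)β - (γ-1)`. Both sides agree at
`β = 1`, and the derivative of their difference is `(γ+1)((γ-1)β^γ + 1 - γβ^(γ-1))`, which is
positive for `β ≠ 1` by Bernoulli's inequality applied to `(β^(γ-1))^(γ/(γ-1))`.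
-/

open Real Set

lemma gamma_mul_rpow_sub_one_lt {γ β : ℝ} (hγ : 1 < γ) (hβ : 0 < β) (hβ1 : β ≠ 1) :
    γ * β ^ (γ - 1) < (γ - 1) * β ^ γ + 1 := by
  have hγ1 : 0 < γ - 1 := by linarith
  set t := β ^ (γ - 1) with ht
  have ht0 : 0 < t := rpow_pos_of_pos hβ _
  have ht1 : t ≠ 1 := by
    intro h
    apply hβ1
    rwa [← rpow_left_inj hβ.le zero_le_one hγ1.ne', one_rpow]
  have hbern := one_add_mul_self_lt_rpow_one_add (s := t - 1) (by linarith) (sub_ne_zero.2 ht1)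
    (p := γ / (γ - 1)) ((one_lt_div hγ1).2 (by linarith))
  rw [add_sub_cancel, ht, ← rpow_mul hβ.le, mul_div_cancel₀ _ hγ1.ne'] at hbern
  have : γ / (γ - 1) * (t - 1) * (γ - 1) = γ * (t - 1) := by field_simp
  nlinarith

lemma hugoniot_rpow_lt {γ β : ℝ} (hγ : 1 < γ) (hβ : 1 < β) :
    β ^ γ * ((γ + 1) - (γ - 1) * β) < (γ + 1) * β - (γ - 1) := by
  let g : ℝ → ℝ := fun x => (γ + 1) * x - (γ - 1) - x ^ γ * ((γ + 1) - (γ - 1) * x)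
  have hg : StrictMonoOn g (Ici 1) := by
    refine strictMonoOn_of_hasDerivWithinAt_pos (convex_Ici 1)
      (f' := fun x => (γ + 1) * ((γ - 1) * x ^ γ + 1 - γ * x ^ (γ - 1))) ?_ ?_ ?_
    · have : ContinuousOn (fun x : ℝ => x ^ γ) (Ici 1) :=
        (continuous_rpow_const (by linarith)).continuousOn
      fun_prop
    · intro x hx
      rw [interior_Ici] at hx
      have hx0 : 0 < x := zero_lt_one.trans hx
      have hpow := hasDerivAt_rpow_const (p := γ) (Or.inl hx0.ne')
      have hx_pow : x ^ γ = x ^ (γ - 1) * x := by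
        rw [← rpow_add_one hx0.ne', sub_add_cancel]
      refine ((((hasDerivAt_id x).const_mul (γ + 1)).sub_const (γ - 1)).sub
        (hpow.mul (((hasDerivAt_id x).const_mul (γ - 1)).const_sub (γ + 1)))).hasDerivWithinAt
        |>.congr_deriv ?_
      simp only [id, hx_pow]
      ring
    · intro x hx
      rw [interior_Ici] at hx
      have := gamma_mul_rpow_sub_one_lt hγ (zero_lt_one.trans hx) hx.ne'
      have : 0 < γ + 1 := by linarith
      positivity
  have := hg self_mem_Ici hβ.le hβ
  simp only [g, one_rpow] at this
  linarith

lemma entropy_lt_of_compression {γ β ρ c : ℝ} (hγ : 1 < γ) (hβ : 1 < β) (hρ : 0 < ρ)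
    (hc : 0 < c) :
    c * ((γ + 1) - (γ - 1) * β) / ρ ^ γ < c * ((γ + 1) * β - (γ - 1)) / (ρ * β) ^ γ := by
  have hβ₀ : 0 < β := zero_lt_one.trans hβ
  rw [mul_rpow hρ.le hβ₀.le, mul_comm (ρ ^ γ), ← div_div,
    div_lt_div_iff_of_pos_right (rpow_pos_of_pos hρ γ), lt_div_iff₀ (rpow_pos_of_pos hβ₀ γ),
    mul_assoc, mul_comm _ (β ^ γ)]
  exact mul_lt_mul_of_pos_left (hugoniot_rpow_lt hγ hβ) hc

theorem stmt16_general (γ B₀ ρm pm vm : ℝ) (hγ : 1 < γ) (hB : 0 < B₀)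
    (K₀ : ℝ) (hK : K₀ = 2 * (γ - 1) * B₀ / (γ + 1))
    (hρ : 0 < ρm)
    (hbern : vm ^ 2 / 2 + γ * pm / ((γ - 1) * ρm) = B₀)
    (hsup : K₀ < vm ^ 2) :
    let vp := K₀ / vm
    let pp := ρm * vm ^ 2 + pm - ρm * K₀
    let ρp := γ * pp / ((γ - 1) * (B₀ - vp ^ 2 / 2))
    pm / ρm ^ γ < pp / ρp ^ γ := by
  intro vp pp ρp
  have hγ₁ : 0 < γ - 1 := by linarith
  have hγ₂ : 0 < γ + 1 := by linarith
  have hK₀ : 0 < K₀ := by rw [hK]; positivity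
  have hB₀ : B₀ = (γ + 1) * K₀ / (2 * (γ - 1)) := by rw [hK]; field_simp
  set β := vm ^ 2 / K₀ with hβ_def
  have hvm : vm ^ 2 = K₀ * β := by rw [hβ_def]; field_simp
  have hβ : 1 < β := (one_lt_div hK₀).2 hsup
  have hpm : pm = ρm * K₀ / (2 * γ) * ((γ + 1) - (γ - 1) * β) := by
    rw [hB₀, hvm] at hbern
    field_simp at hbern ⊢
    linear_combination hbern
  have hpp : pp = ρm * K₀ / (2 * γ) * ((γ + 1) * β - (γ - 1)) := by
    simp only [pp]
    rw [hpm, hvm]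
    field_simp
    ring
  have hA : 0 < (γ + 1) * β - (γ - 1) := by nlinarith
  have hρp : ρp = ρm * β := by
    simp only [ρp, vp]
    rw [hpp, hB₀, div_pow, hvm]
    field_simp
  rw [hρp, hpp, hpm]
  exact entropy_lt_of_compression hγ hβ hρ (by positivity)

/-- Entropy increases strictly across a transonic normal shock of ideal polytropic gas:
`p₊/ρ₊^γ > p₋/ρ₋^γ`. -/
theorem stmt16 (γ B₀ ρm pm vm : ℝ) (hγ : 1 < γ) (hB : 0 < B₀)
    (K₀ : ℝ) (hK : K₀ = 2 * (γ - 1) * B₀ / (γ + 1))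
    (hρ : 0 < ρm) (hp : 0 < pm) (hv : 0 < vm)
    (hbern : vm ^ 2 / 2 + γ * pm / ((γ - 1) * ρm) = B₀)
    (hsup : K₀ < vm ^ 2) (hbound : vm ^ 2 < 2 * B₀) :
    let vp := K₀ / vm
    let pp := ρm * vm ^ 2 + pm - ρm * K₀
    let ρp := γ * pp / ((γ - 1) * (B₀ - vp ^ 2 / 2))
    pm / ρm ^ γ < pp / ρp ^ γ :=
  stmt16_general γ B₀ ρm pm vm hγ hB K₀ hK hρ hbern hsup
end
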